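/- Define θ(s) = 1/2 + e^{−s²}/(4·I_1(s)). Then θ(s) → 1/2 as s → +∞, θ(0) = 1, and θ(s)/s² → 1 as s → −∞. -/

import Mathlib

/-!
Completing the square gives `I_1(s) = e^{-s²} G(s)` with `G(s) = ∫₀^∞ z e^{2sz - z²} dz`,
so `θ = 1/2 + 1/(4 G)`. On `[1, 2]` the integrand of `G` is at least `e^{2s-4}`, so `G → ∞`
as `s → +∞`. At `s = 0` the integral is elementary. As `s → -∞`, the substitution
`v = -2 s z` turns `4 s² G(s)` into `∫₀^∞ v e^{-v - v²/(4s²)} dv`, which tends to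
`Γ(2) = 1` by dominated convergence.
-/

open MeasureTheory Real Filter

noncomputable def In (n : ℕ) (s : ℝ) : ℝ :=
  ∫ z in Set.Ioi (0 : ℝ), z ^ n * Real.exp (-(z - s) ^ 2)

noncomputable def theta (s : ℝ) : ℝ :=
  1 / 2 + Real.exp (-s ^ 2) / (4 * In 1 s)

open Set Topology

noncomputable def tiltedGaussMoment (s : ℝ) : ℝ :=
  ∫ z in Ioi 0, z * exp (2 * s * z - z ^ 2)

lemma integrable_mul_exp_neg_sub_sq (s : ℝ) :
    Integrable fun z : ℝ => z * exp (-(z - s) ^ 2) := by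
  have h₁ := (integrable_mul_exp_neg_mul_sq one_pos).comp_sub_right s
  have h₂ := ((integrable_exp_neg_mul_sq one_pos).comp_sub_right s).const_mul s
  refine (h₁.add h₂).congr (ae_of_all _ fun z => ?_)
  simp only [Pi.add_apply, neg_mul, one_mul]
  ring

lemma exp_two_mul_mul_sub_sq (s z : ℝ) :
    exp (2 * s * z - z ^ 2) = exp (s ^ 2) * exp (-(z - s) ^ 2) := by
  rw [← exp_add]
  ring_nf

lemma integrable_mul_exp_two_mul_mul_sub_sq (s : ℝ) :
    Integrable fun z : ℝ => z * exp (2 * s * z - z ^ 2) := by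
  simpa only [exp_two_mul_mul_sub_sq, mul_left_comm] using
    (integrable_mul_exp_neg_sub_sq s).const_mul (exp (s ^ 2))

lemma tiltedGaussMoment_eq_exp_mul_In (s : ℝ) : tiltedGaussMoment s = exp (s ^ 2) * In 1 s := by
  simp only [tiltedGaussMoment, In, exp_two_mul_mul_sub_sq, pow_one, ← integral_const_mul,
    mul_left_comm]

lemma theta_eq (s : ℝ) : theta s = 1 / 2 + (4 * tiltedGaussMoment s)⁻¹ := by
  rw [theta, tiltedGaussMoment_eq_exp_mul_In, exp_neg]
  ring

lemma exp_two_mul_sub_four_le_tiltedGaussMoment {s : ℝ} (hs : 0 ≤ s) :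
    exp (2 * s - 4) ≤ tiltedGaussMoment s := by
  have hle : ∀ z ∈ Icc (1 : ℝ) 2, exp (2 * s - 4) ≤ z * exp (2 * s * z - z ^ 2) :=
    fun z hz => calc
      exp (2 * s - 4) ≤ exp (2 * s * z - z ^ 2) := exp_le_exp.2 (by nlinarith [hz.1, hz.2])
      _ ≤ z * exp (2 * s * z - z ^ 2) := le_mul_of_one_le_left (exp_pos _).le hz.1
  have hIcc := setIntegral_ge_of_const_le measurableSet_Icc (by simp) hle
    (integrable_mul_exp_two_mul_mul_sub_sq s).integrableOn
  have hnonneg : 0 ≤ᵐ[volume.restrict (Ioi 0)] fun z : ℝ => z * exp (2 * s * z - z ^ 2) :=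
    (ae_restrict_mem measurableSet_Ioi).mono fun z (hz : 0 < z) => by positivity
  have hmono := setIntegral_mono_set (integrable_mul_exp_two_mul_mul_sub_sq s).integrableOn
    hnonneg (LE.le.eventuallyLE fun z (hz : z ∈ Icc (1 : ℝ) 2) => one_pos.trans_le hz.1)
  norm_num [Real.volume_real_Icc] at hIcc
  exact hIcc.trans hmono

lemma tendsto_tiltedGaussMoment_atTop : Tendsto tiltedGaussMoment atTop atTop := by
  refine tendsto_atTop_mono' _ ?_ (tendsto_exp_atTop.comp (tendsto_atTop_add_const_right _ (-4)
    (tendsto_id.const_mul_atTop two_pos)))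
  filter_upwards [eventually_ge_atTop 0] with s hs
  simpa [sub_eq_add_neg] using exp_two_mul_sub_four_le_tiltedGaussMoment hs

lemma integral_Ioi_mul_exp_neg_sq : ∫ z in Ioi (0 : ℝ), z * exp (-z ^ 2) = 1 / 2 := by
  simpa using integral_rpow_mul_exp_neg_rpow (p := 2) (q := 1) two_pos (by norm_num)

lemma In_one_zero : In 1 0 = 1 / 2 := by
  simpa [In] using integral_Ioi_mul_exp_neg_sq

lemma integral_Ioi_mul_exp_neg : ∫ v in Ioi (0 : ℝ), v * exp (-v) = 1 := by
  simpa [mul_comm, show (2 : ℝ) - 1 = 1 by norm_num] using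
    integral_rpow_mul_exp_neg_mul_Ioi (a := 2) (r := 1) two_pos one_pos

lemma integrableOn_Ioi_mul_exp_neg : IntegrableOn (fun v : ℝ => v * exp (-v)) (Ioi 0) := by
  simpa using integrableOn_rpow_mul_exp_neg_mul_rpow (s := 1) (p := 1) (b := 1)
    (by norm_num) one_pos one_pos

lemma tendsto_integral_Ioi_mul_exp_neg_sub_mul_sq :
    Tendsto (fun ε : ℝ => ∫ v in Ioi 0, v * exp (-v - ε * v ^ 2)) (𝓝[>] 0) (𝓝 1) := by
  rw [← integral_Ioi_mul_exp_neg]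
  refine tendsto_integral_filter_of_dominated_convergence (fun v => v * exp (-v))
    (.of_forall fun ε => (by fun_prop : Continuous _).aestronglyMeasurable) ?_ ?_ ?_
  · filter_upwards [self_mem_nhdsWithin] with ε (hε : 0 < ε)
    filter_upwards [ae_restrict_mem measurableSet_Ioi] with v (hv : 0 < v)
    rw [norm_of_nonneg (by positivity)]
    gcongr
    nlinarith [sq_nonneg v]
  · exact integrableOn_Ioi_mul_exp_neg
  · refine ae_of_all _ fun v => ?_
    have hcont : Continuous fun ε : ℝ => v * exp (-v - ε * v ^ 2) := by fun_prop
    simpa using (hcont.tendsto 0).mono_left nhdsWithin_le_nhds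

lemma four_mul_sq_mul_tiltedGaussMoment {s : ℝ} (hs : s < 0) :
    4 * s ^ 2 * tiltedGaussMoment s = ∫ v in Ioi 0, v * exp (-v - (4 * s ^ 2)⁻¹ * v ^ 2) := by
  have key := integral_comp_mul_left_Ioi (fun v => v * exp (-v - (4 * s ^ 2)⁻¹ * v ^ 2)) 0
    (by linarith : 0 < -2 * s)
  have hsubst : ∀ x : ℝ, -2 * s * x * exp (-(-2 * s * x) - (4 * s ^ 2)⁻¹ * (-2 * s * x) ^ 2)
      = -2 * s * (x * exp (2 * s * x - x ^ 2)) := fun x => by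
    rw [show -(-2 * s * x) - (4 * s ^ 2)⁻¹ * (-2 * s * x) ^ 2 = 2 * s * x - x ^ 2 by
      field_simp [hs.ne]; ring]
    ring
  simp only [hsubst, integral_const_mul, mul_zero, smul_eq_mul] at key
  calc 4 * s ^ 2 * tiltedGaussMoment s = -2 * s * (-2 * s * tiltedGaussMoment s) := by ring
    _ = _ := by rw [tiltedGaussMoment, key, mul_inv_cancel_left₀ (by linarith)]

lemma tendsto_sq_atBot_atTop : Tendsto (fun s : ℝ => s ^ 2) atBot atTop := by
  simpa only [Function.comp_def, neg_sq] using
    (tendsto_pow_atTop two_ne_zero).comp (tendsto_neg_atBot_atTop (G := ℝ))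

lemma tendsto_four_mul_sq_mul_tiltedGaussMoment_atBot :
    Tendsto (fun s => 4 * s ^ 2 * tiltedGaussMoment s) atBot (𝓝 1) := by
  have hsq : Tendsto (fun s : ℝ => 4 * s ^ 2) atBot atTop :=
    tendsto_sq_atBot_atTop.const_mul_atTop four_pos
  refine (tendsto_integral_Ioi_mul_exp_neg_sub_mul_sq.comp
    (tendsto_inv_atTop_nhdsGT_zero.comp hsq)).congr' ?_
  filter_upwards [eventually_lt_atBot 0] with s hs
  exact (four_mul_sq_mul_tiltedGaussMoment hs).symm

lemma theta_div_sq (s : ℝ) :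
    theta s / s ^ 2 = (2 * s ^ 2)⁻¹ + (4 * s ^ 2 * tiltedGaussMoment s)⁻¹ := by
  rw [theta_eq]
  simp only [div_eq_mul_inv, mul_inv]
  ring

theorem theta_limits :
    Tendsto theta atTop (nhds (1 / 2)) ∧
    theta 0 = 1 ∧
    Tendsto (fun s => theta s / s ^ 2) atBot (nhds 1) := by
  refine ⟨?_, ?_, ?_⟩
  · have h := (tendsto_const_nhds (x := (1 / 2 : ℝ))).add
      (tendsto_tiltedGaussMoment_atTop.const_mul_atTop four_pos).inv_tendsto_atTop
    rw [add_zero] at h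
    exact h.congr fun s => (theta_eq s).symm
  · rw [theta, In_one_zero]
    norm_num
  · have h := ((tendsto_sq_atBot_atTop.const_mul_atTop two_pos).inv_tendsto_atTop).add
      (tendsto_four_mul_sq_mul_tiltedGaussMoment_atBot.inv₀ one_ne_zero)
    simpa [theta_div_sq] using h
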